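/- Let K be an algebraically closed field equipped with a multiplicative nonarchimedean (ultrametric) absolute value ‖·‖. Fix an integer d ≥ 2 with ‖(d : K)‖ = 1 (the image of d in K under the natural ring map ℕ → K has absolute value 1) and λ ∈ K with ‖λ‖ > 1, and let f_λ : K → K be f_λ(z) := z^d + λ. Then for every n ≥ 1, the set P_n := {z ∈ K : f_λ^{∘n}(z) = z} of fixed points of the n-fold iterate is finite of cardinality exactly d^n. -/
import Mathlib

open Polynomial

section Aux

variable {K : Type*} [NormedField K]

/-- Ultrametric equality when norms differ. -/
lemma ultra_add_eq (hultra : ∀ x y : K, ‖x + y‖ ≤ max ‖x‖ ‖y‖)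
    {a b : K} (h : ‖a‖ < ‖b‖) : ‖a + b‖ = ‖b‖ := by
  refine le_antisymm ((hultra a b).trans (max_le h.le le_rfl)) ?_
  by_contra hc
  push_neg at hc
  have h2 := hultra (a + b) (-a)
  have h3 : a + b + -a = b := by ring
  rw [h3, norm_neg] at h2
  exact absurd h2 (not_le.mpr (max_lt hc h))

/-- Growth along the orbit once we escape. -/
lemma orbit_growth (d : ℕ) (hd : 2 ≤ d) (lam : K) (hlam : 1 < ‖lam‖)
    (hultra : ∀ x y : K, ‖x + y‖ ≤ max ‖x‖ ‖y‖)
    (w : K) (hw : ‖lam‖ < ‖w‖ ^ d) :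
    ∀ k, ‖w‖ ≤ ‖(fun z : K => z ^ d + lam)^[k] w‖ ∧
      ‖lam‖ < ‖(fun z : K => z ^ d + lam)^[k] w‖ ^ d := by
  intro k
  induction k with
  | zero => exact ⟨le_rfl, hw⟩
  | succ k ih =>
    obtain ⟨h1, h2⟩ := ih
    set u := (fun z : K => z ^ d + lam)^[k] w with hu
    have hstep : (fun z : K => z ^ d + lam)^[k+1] w = u ^ d + lam := by
      rw [Function.iterate_succ_apply']
    have hu1 : 1 < ‖u‖ := by
      by_contra hc
      push_neg at hc
      have : ‖u‖ ^ d ≤ 1 := pow_le_one₀ (norm_nonneg u) hc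
      linarith
    have heq : ‖u ^ d + lam‖ = ‖u‖ ^ d := by
      rw [add_comm]
      rw [← norm_pow u d] at h2 ⊢
      exact ultra_add_eq hultra h2
    constructor
    · rw [hstep, heq]
      calc ‖w‖ ≤ ‖u‖ := h1
        _ ≤ ‖u‖ ^ d := le_self_pow₀ hu1.le (by omega)
    · rw [hstep, heq]
      have h3 : 1 < ‖u‖ ^ d := one_lt_pow₀ hu1 (by omega)
      calc ‖lam‖ < ‖u‖ ^ d := h2
        _ ≤ (‖u‖ ^ d) ^ d := le_self_pow₀ h3.le (by omega)

/-- Every periodic point sits on the critical circle `‖z‖^d = ‖lam‖`. -/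
lemma periodic_norm (d : ℕ) (hd : 2 ≤ d) (lam : K) (hlam : 1 < ‖lam‖)
    (hultra : ∀ x y : K, ‖x + y‖ ≤ max ‖x‖ ‖y‖)
    {n : ℕ} (hn : 1 ≤ n) {z : K} (hz : (fun w : K => w ^ d + lam)^[n] z = z) :
    ‖z‖ ^ d = ‖lam‖ := by
  set f : K → K := fun w => w ^ d + lam with hf
  rcases lt_trichotomy (‖z‖ ^ d) ‖lam‖ with h | h | h
  · -- then ‖f z‖ = ‖lam‖ and f z escapes
    exfalso
    have hfz : ‖f z‖ = ‖lam‖ := by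
      have : ‖z ^ d‖ < ‖lam‖ := by rwa [norm_pow]
      simpa [hf] using ultra_add_eq hultra this
    have hesc : ‖lam‖ < ‖f z‖ ^ d := by
      rw [hfz]
      calc ‖lam‖ = ‖lam‖ ^ 1 := (pow_one _).symm
        _ < ‖lam‖ ^ d := pow_lt_pow_right₀ hlam (by omega)
    have hgrow := (orbit_growth d hd lam hlam hultra (f z) hesc (n - 1)).1
    have hiter : f^[n-1] (f z) = z := by
      have h1 : f^[n-1] (f z) = f^[n-1+1] z := (Function.iterate_succ_apply f (n-1) z).symm
      rw [h1, Nat.sub_add_cancel hn]; exact hz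
    rw [hiter] at hgrow
    rw [hfz] at hgrow
    have hz1 : ‖z‖ ^ d < ‖z‖ := lt_of_lt_of_le h hgrow
    have : ‖z‖ < 1 := by
      by_contra hc
      push_neg at hc
      exact absurd (le_self_pow₀ hc (by omega)) (not_le.mpr hz1)
    linarith
  · exact h
  · exfalso
    have hz1 : 1 < ‖z‖ := by
      by_contra hc
      push_neg at hc
      have : ‖z‖ ^ d ≤ 1 := pow_le_one₀ (norm_nonneg z) hc
      linarith
    have hfz : ‖f z‖ = ‖z‖ ^ d := by
      have : ‖lam‖ < ‖z ^ d‖ := by rwa [norm_pow]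
      have := ultra_add_eq hultra this
      rw [add_comm] at this
      simpa [hf] using this
    have hesc : ‖lam‖ < ‖f z‖ ^ d := by
      rw [hfz]
      calc ‖lam‖ < ‖z‖ ^ d := h
        _ ≤ (‖z‖ ^ d) ^ d := le_self_pow₀ (one_le_pow₀ hz1.le) (by omega)
    have hgrow := (orbit_growth d hd lam hlam hultra (f z) hesc (n - 1)).1
    have hiter : f^[n-1] (f z) = z := by
      have h1 : f^[n-1] (f z) = f^[n-1+1] z := (Function.iterate_succ_apply f (n-1) z).symm
      rw [h1, Nat.sub_add_cancel hn]; exact hz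
    rw [hiter] at hgrow
    have : ‖z‖ < ‖f z‖ := by
      rw [hfz]
      calc ‖z‖ = ‖z‖ ^ 1 := (pow_one _).symm
        _ < ‖z‖ ^ d := pow_lt_pow_right₀ hz1 (by omega)
    have h2 : ‖f z‖ ≤ ‖z‖ := hgrow
    linarith

/-- The iterated polynomial. -/
noncomputable def iterPoly (d : ℕ) (lam : K) : ℕ → K[X]
  | 0 => X
  | k + 1 => (X ^ d + C lam).comp (iterPoly d lam k)

lemma iterPoly_eval (d : ℕ) (lam : K) (k : ℕ) (z : K) :
    (iterPoly d lam k).eval z = (fun w : K => w ^ d + lam)^[k] z := by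
  induction k with
  | zero => simp [iterPoly]
  | succ k ih =>
    rw [iterPoly, eval_comp, ih, Function.iterate_succ_apply']
    simp

lemma iterPoly_monic (d : ℕ) (hd : 2 ≤ d) (lam : K) (k : ℕ) :
    (iterPoly d lam k).Monic ∧ (iterPoly d lam k).natDegree = d ^ k := by
  induction k with
  | zero => exact ⟨monic_X, by simp [iterPoly]⟩
  | succ k ih =>
    obtain ⟨hm, hdeg⟩ := ih
    have hp : (X ^ d + C lam : K[X]).Monic := monic_X_pow_add_C lam (by omega)
    have hpd : (X ^ d + C lam : K[X]).natDegree = d := natDegree_X_pow_add_C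
    have hne : (iterPoly d lam k).natDegree ≠ 0 := by
      rw [hdeg]; positivity
    refine ⟨hp.comp hm hne, ?_⟩
    rw [iterPoly, natDegree_comp, hpd, hdeg, pow_succ, mul_comm]

lemma iterPoly_deriv_norm (d : ℕ) (hd : 2 ≤ d) (lam : K) (hdnorm : ‖(d : K)‖ = 1)
    (z : K) (hz : ∀ k : ℕ, 1 < ‖(fun w : K => w ^ d + lam)^[k] z‖) :
    (∀ k : ℕ, 1 ≤ ‖(derivative (iterPoly d lam k)).eval z‖) ∧
    (∀ k : ℕ, 1 ≤ k → 1 < ‖(derivative (iterPoly d lam k)).eval z‖) := by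
  have key : ∀ k : ℕ, ‖(derivative (iterPoly d lam (k+1))).eval z‖ =
      ‖(fun w : K => w ^ d + lam)^[k] z‖ ^ (d - 1) *
        ‖(derivative (iterPoly d lam k)).eval z‖ := by
    intro k
    have : derivative (iterPoly d lam (k+1)) =
        derivative (iterPoly d lam k) * (derivative (X ^ d + C lam)).comp (iterPoly d lam k) := by
      rw [iterPoly, derivative_comp]
    rw [this, eval_mul, eval_comp, norm_mul]
    have hder : derivative (X ^ d + C lam : K[X]) = C (d : K) * X ^ (d - 1) := by
      rw [derivative_add, derivative_C, add_zero, derivative_X_pow, C_eq_natCast]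
    rw [hder, eval_mul, eval_C, eval_pow, eval_X, norm_mul, norm_pow, hdnorm, one_mul,
      iterPoly_eval, mul_comm]
  have h1 : ∀ k : ℕ, 1 ≤ ‖(derivative (iterPoly d lam k)).eval z‖ := by
    intro k
    induction k with
    | zero => simp [iterPoly]
    | succ k ih =>
      rw [key k]
      have := one_lt_pow₀ (hz k) (n := d - 1) (by omega)
      nlinarith
  refine ⟨h1, fun k hk => ?_⟩
  obtain ⟨m, rfl⟩ : ∃ m, k = m + 1 := ⟨k - 1, by omega⟩
  rw [key m]
  have h2 := one_lt_pow₀ (hz m) (n := d - 1) (by omega)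
  have h3 := h1 m
  nlinarith

end Aux

/-- Over an algebraically closed nonarchimedean normed field, with `d ≥ 2`, `‖(d:K)‖ = 1`
and `‖λ‖ > 1`, the set `P_n` of fixed points of the `n`-fold iterate of
`f_λ(z) = z^d + λ` is finite of cardinality exactly `d^n`. -/
theorem card_periodic_points {K : Type*} [NormedField K] [IsAlgClosed K]
    (hultra : ∀ x y : K, ‖x + y‖ ≤ max ‖x‖ ‖y‖)
    (d : ℕ) (hd : 2 ≤ d) (hdnorm : ‖(d : K)‖ = 1)
    (lam : K) (hlam : 1 < ‖lam‖) (n : ℕ) (hn : 1 ≤ n) :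
    ∃ P : Finset K,
      (∀ z : K, z ∈ P ↔ (fun w : K => w ^ d + lam)^[n] z = z) ∧ P.card = d ^ n := by
  classical
  set f : K → K := fun w => w ^ d + lam with hf
  obtain ⟨hqm, hqd⟩ := iterPoly_monic d hd lam n
  set F : K[X] := iterPoly d lam n - X with hF
  have hdn : 2 ≤ d ^ n := le_trans hd (le_self_pow₀ (by omega) (by omega))
  have hdegX : (X : K[X]).degree < (iterPoly d lam n).degree := by
    rw [degree_X, degree_eq_natDegree hqm.ne_zero, hqd]
    have h1 : 1 < d ^ n := by omega
    exact_mod_cast h1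
  have hFm : F.Monic := hqm.sub_of_left hdegX
  have hF0 : F ≠ 0 := hFm.ne_zero
  have hFdeg : F.natDegree = d ^ n := by
    have h1 : F.natDegree = (iterPoly d lam n).natDegree :=
      natDegree_eq_of_degree_eq (degree_sub_eq_left_of_degree_lt hdegX)
    rw [h1, hqd]
  have hFeval : ∀ z : K, F.eval z = f^[n] z - z := by
    intro z; rw [hF, eval_sub, eval_X, iterPoly_eval]
  -- roots of F are the periodic points
  have hroot : ∀ z : K, F.IsRoot z ↔ f^[n] z = z := by
    intro z
    rw [IsRoot, hFeval, sub_eq_zero]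
  -- each periodic point's orbit lies outside the unit ball
  have horbit : ∀ z : K, f^[n] z = z → ∀ k : ℕ, 1 < ‖f^[k] z‖ := by
    intro z hz k
    have hper : f^[n] (f^[k] z) = f^[k] z := by
      rw [← Function.iterate_add_apply, Nat.add_comm, Function.iterate_add_apply, hz]
    have := periodic_norm d hd lam hlam hultra hn hper
    by_contra hc
    push_neg at hc
    have : ‖f^[k] z‖ ^ d ≤ 1 := pow_le_one₀ (norm_nonneg _) hc
    linarith
  -- roots are simple
  have hsimple : ∀ t : K, F.rootMultiplicity t ≤ 1 := by
    intro t
    by_contra hc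
    push_neg at hc
    obtain ⟨hr0, hr1⟩ := (one_lt_rootMultiplicity_iff_isRoot hF0).mp hc
    have hper : f^[n] t = t := (hroot t).mp hr0
    have hd1 := (iterPoly_deriv_norm d hd lam hdnorm t (horbit t hper)).2 n hn
    have : (derivative F).eval t = (derivative (iterPoly d lam n)).eval t - 1 := by
      rw [hF, derivative_sub, derivative_X, eval_sub, eval_one]
    rw [IsRoot, this, sub_eq_zero] at hr1
    rw [hr1, norm_one] at hd1
    exact lt_irrefl 1 hd1
  have hnodup : F.roots.Nodup := by
    rw [Multiset.nodup_iff_count_le_one]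
    intro t
    rw [count_roots]
    exact hsimple t
  have hcard : Multiset.card F.roots = d ^ n := by
    rw [splits_iff_card_roots.mp (IsAlgClosed.splits F), hFdeg]
  refine ⟨F.roots.toFinset, fun z => ?_, ?_⟩
  · rw [Multiset.mem_toFinset, mem_roots hF0, hroot z]
  · rw [Multiset.toFinset_card_of_nodup hnodup, hcard]
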